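/- If G is the disjoint union of two graphs G_1 and G_2 without isolated vertices, then \gamma_g(G_1 \cup G_2) \le \gamma_g(G_1) + \gamma_g(G_2) + 2. -/
import Mathlib


open Finset
open scoped Classical

variable {V : Type*}

/-- The closed neighborhood `N[v]` of a vertex, as a finset. -/
noncomputable def closedNbhd [Fintype V] (G : SimpleGraph V) (v : V) : Finset V :=
  Finset.univ.filter (fun u => u = v ∨ G.Adj v u)

/-- The legal moves in the domination game when `D` is the set of dominated vertices:
vertices whose closed neighborhood is not already dominated. -/
noncomputable def legalMoves [Fintype V] (G : SimpleGraph V) (D : Finset V) : Finset V :=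
  Finset.univ.filter (fun v => ¬ closedNbhd G v ⊆ D)

lemma legalMoves_nonempty [Fintype V] (G : SimpleGraph V) {D : Finset V}
    (h : D ≠ Finset.univ) : (legalMoves G D).Nonempty := by
  obtain ⟨v, hv⟩ : ∃ v, v ∉ D := by
    by_contra hc
    push_neg at hc
    exact h (Finset.eq_univ_iff_forall.2 hc)
  refine ⟨v, ?_⟩
  simp only [legalMoves, Finset.mem_filter, Finset.mem_univ, true_and]
  intro hsub
  exact hv (hsub (by simp [closedNbhd]))

lemma card_lt_of_legal [Fintype V] (G : SimpleGraph V) {D : Finset V} {v : V}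
    (hv : v ∈ legalMoves G D) :
    (Finset.univ \ (D ∪ closedNbhd G v)).card < (Finset.univ \ D).card := by
  simp only [legalMoves, Finset.mem_filter, Finset.mem_univ, true_and] at hv
  obtain ⟨u, hu1, hu2⟩ := Finset.not_subset.1 hv
  apply Finset.card_lt_card
  constructor
  · exact Finset.sdiff_subset_sdiff (le_refl _) Finset.subset_union_left
  · intro hsub
    have := hsub (Finset.mem_sdiff.2 ⟨Finset.mem_univ u, hu2⟩)
    simp only [Finset.mem_sdiff, Finset.mem_union] at this
    exact this.2 (Or.inr hu1)

/-- Optimal number of moves in the domination game on the partially dominated graph `G|D`;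
`turn = true` means Dominator (the minimizer) moves next, `turn = false` means Staller
(the maximizer) moves next.  Every move must dominate a not-yet-dominated vertex and the
game ends when all vertices are dominated. -/
noncomputable def gameVal [Fintype V] (G : SimpleGraph V) : Bool → Finset V → ℕ
  | turn, D =>
    if h : D = Finset.univ then 0
    else
      have hne : (legalMoves G D).attach.Nonempty :=
        (Finset.attach_nonempty_iff).2 (legalMoves_nonempty G h)
      if turn then
        1 + (legalMoves G D).attach.inf' hne
          (fun v => gameVal G false (D ∪ closedNbhd G v.1))
      else
        1 + (legalMoves G D).attach.sup' hne
          (fun v => gameVal G true (D ∪ closedNbhd G v.1))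
  termination_by turn D => (Finset.univ \ D).card
  decreasing_by all_goals exact card_lt_of_legal G v.2

/-- The Dominator-start game domination number `γ_g(G|S)` of the partially dominated graph. -/
noncomputable def gammaG [Fintype V] (G : SimpleGraph V) (S : Finset V) : ℕ :=
  gameVal G true S

/-- The Staller-start game domination number `γ_g'(G|S)` of the partially dominated graph. -/
noncomputable def gammaG' [Fintype V] (G : SimpleGraph V) (S : Finset V) : ℕ :=
  gameVal G false S

/-- Optimal number of (non-pass) moves in the Staller `p`-pass domination game on `G|D`:
the Dominator-start game in which Staller may additionally pass at most `p` times. -/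
noncomputable def passVal [Fintype V] (G : SimpleGraph V) : Bool → ℕ → Finset V → ℕ
  | turn, p, D =>
    if h : D = Finset.univ then 0
    else
      have hne : (legalMoves G D).attach.Nonempty :=
        (Finset.attach_nonempty_iff).2 (legalMoves_nonempty G h)
      if turn then
        1 + (legalMoves G D).attach.inf' hne
          (fun v => passVal G false p (D ∪ closedNbhd G v.1))
      else
        match p with
        | 0 =>
          1 + (legalMoves G D).attach.sup' hne
            (fun v => passVal G true 0 (D ∪ closedNbhd G v.1))
        | q + 1 =>
          max
            (1 + (legalMoves G D).attach.sup' hne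
              (fun v => passVal G true (q + 1) (D ∪ closedNbhd G v.1)))
            (passVal G true q D)
  termination_by turn p D => ((Finset.univ \ D).card, p)
  decreasing_by
  · exact Prod.Lex.left _ _ (card_lt_of_legal G v.2)
  · exact Prod.Lex.left _ _ (card_lt_of_legal G v.2)
  · exact Prod.Lex.left _ _ (card_lt_of_legal G v.2)
  · exact Prod.Lex.right _ (Nat.lt_succ_self q)

/-- `γ_g^{St,p}(G)`: the Staller `p`-pass game domination number. -/
noncomputable def gammaPass [Fintype V] (G : SimpleGraph V) (p : ℕ) : ℕ :=
  passVal G true p ∅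

/-- Value (in `ℤ`) of the Dominator `1`-pass game on `G|D` in which the payoff is the
number of moves made minus the number of passes used by Dominator; Dominator minimizes,
Staller maximizes.  `turn = true` means it is Dominator's move, `pass = true` means the
pass is still available to Dominator. -/
noncomputable def domPassVal [Fintype V] (G : SimpleGraph V) : Bool → Bool → Finset V → ℤ
  | turn, pass, D =>
    if h : D = Finset.univ then 0
    else
      have hne : (legalMoves G D).attach.Nonempty :=
        (Finset.attach_nonempty_iff).2 (legalMoves_nonempty G h)
      if turn then
        match pass with
        | false =>
          1 + (legalMoves G D).attach.inf' hne
            (fun v => domPassVal G false false (D ∪ closedNbhd G v.1))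
        | true =>
          min
            (1 + (legalMoves G D).attach.inf' hne
              (fun v => domPassVal G false true (D ∪ closedNbhd G v.1)))
            (domPassVal G false false D - 1)
      else
        1 + (legalMoves G D).attach.sup' hne
          (fun v => domPassVal G true pass (D ∪ closedNbhd G v.1))
  termination_by turn pass D => ((Finset.univ \ D).card, pass.toNat)
  decreasing_by
  · exact Prod.Lex.left _ _ (card_lt_of_legal G v.2)
  · exact Prod.Lex.left _ _ (card_lt_of_legal G v.2)
  · exact Prod.Lex.right _ (by norm_num)
  · exact Prod.Lex.left _ _ (card_lt_of_legal G v.2)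

/-- A graph is a double-Staller graph if, in the Dominator `1`-pass game, Staller has a
strategy forcing at least `γ_g(G) + p` moves, where `p ∈ {0,1}` is the number of passes
used by Dominator.  Equivalently, the optimal value of "moves minus Dominator passes" in
that game is at least `γ_g(G)`. -/
def IsDoubleStaller [Fintype V] (G : SimpleGraph V) : Prop :=
  (gammaG G ∅ : ℤ) ≤ domPassVal G true true ∅

/-- An edge cut of `G`: a set of edges whose removal disconnects `G`. -/
def IsEdgeCut (G : SimpleGraph V) (C : Set (Sym2 V)) : Prop :=
  C ⊆ G.edgeSet ∧ ¬ (G.deleteEdges C).Connected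

/-- A minimal edge cut: no proper subset is an edge cut. -/
def IsMinimalEdgeCut (G : SimpleGraph V) (C : Set (Sym2 V)) : Prop :=
  IsEdgeCut G C ∧ ∀ C' ⊂ C, ¬ IsEdgeCut G C'

/-- A minimum edge cut: an edge cut of the smallest possible cardinality (this
cardinality is the edge-connectivity `κ'(G)`). -/
def IsMinimumEdgeCut (G : SimpleGraph V) (C : Set (Sym2 V)) : Prop :=
  IsEdgeCut G C ∧ ∀ C', IsEdgeCut G C' → C.ncard ≤ C'.ncard

/-- A graph is traceable if it contains a Hamiltonian path. -/
def Traceable (G : SimpleGraph V) : Prop :=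
  ∃ (a b : V) (p : G.Walk a b), p.IsHamiltonian
/-- The disjoint union of two graphs. -/
def sumGraph {V₁ V₂ : Type*} (G₁ : SimpleGraph V₁) (G₂ : SimpleGraph V₂) :
    SimpleGraph (V₁ ⊕ V₂) :=
  SimpleGraph.fromRel (fun a b =>
    match a, b with
    | Sum.inl u, Sum.inl w => G₁.Adj u w
    | Sum.inr u, Sum.inr w => G₂.Adj u w
    | _, _ => False)

/-- The graph `H_{x,3}`: two disjoint copies of `H` (the first copy on `Sum.inl ∘ Sum.inl`,
the second on `Sum.inl ∘ Sum.inr`) joined by a path of length 3 from `x` to its copy `x'`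
through the two internal vertices `y = Sum.inr 0` (adjacent to `x`) and
`y' = Sum.inr 1` (adjacent to `x'`). -/
def Hx3 (H : SimpleGraph V) (x : V) : SimpleGraph ((V ⊕ V) ⊕ Fin 2) :=
  SimpleGraph.fromRel (fun a b =>
    match a, b with
    | Sum.inl (Sum.inl u), Sum.inl (Sum.inl w) => H.Adj u w
    | Sum.inl (Sum.inr u), Sum.inl (Sum.inr w) => H.Adj u w
    | Sum.inl (Sum.inl u), Sum.inr i => u = x ∧ i = 0
    | Sum.inl (Sum.inr u), Sum.inr i => u = x ∧ i = 1
    | Sum.inr i, Sum.inr j => i ≠ j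
    | _, _ => False)

/-- The tree `T_n`: a star `K_{1,n}` with center `Sum.inl ()`, support vertices
`Sum.inr (Sum.inl i)`, and four leaves `Sum.inr (Sum.inr (i, l))` attached to each
support vertex. -/
def Tn (n : ℕ) : SimpleGraph (Unit ⊕ (Fin n ⊕ Fin n × Fin 4)) :=
  SimpleGraph.fromRel (fun a b =>
    match a, b with
    | Sum.inl _, Sum.inr (Sum.inl _) => True
    | Sum.inr (Sum.inl i), Sum.inr (Sum.inr jl) => i = jl.1
    | _, _ => False)

/-- The graph `K_k(H)`: the disjoint union of the complete graph `K_k` (on `Fin k`,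
embedded via `Sum.inl`) and the graph `H` (embedded via `Sum.inr`), together with the
two extra edges `au` and `bv`. -/
def KkH {W : Type*} (k : ℕ) (H : SimpleGraph W) (u v : Fin k) (a b : W) :
    SimpleGraph (Fin k ⊕ W) :=
  SimpleGraph.fromRel (fun s t =>
    match s, t with
    | Sum.inl i, Sum.inl j => i ≠ j
    | Sum.inr w₁, Sum.inr w₂ => H.Adj w₁ w₂
    | Sum.inl i, Sum.inr w => (i = u ∧ w = a) ∨ (i = v ∧ w = b)
    | _, _ => False)


section Helpers
variable {V : Type*} [Fintype V] (G : SimpleGraph V)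

lemma gameVal_univ (t : Bool) : gameVal G t Finset.univ = 0 := by
  rw [gameVal]; simp

lemma gameVal_true_eq {D : Finset V} (h : D ≠ Finset.univ) :
    gameVal G true D = 1 + (legalMoves G D).attach.inf'
      ((Finset.attach_nonempty_iff).2 (legalMoves_nonempty G h))
      (fun v => gameVal G false (D ∪ closedNbhd G v.1)) := by
  conv_lhs => rw [gameVal]
  rw [dif_neg h]; rfl

lemma gameVal_false_eq {D : Finset V} (h : D ≠ Finset.univ) :
    gameVal G false D = 1 + (legalMoves G D).attach.sup'
      ((Finset.attach_nonempty_iff).2 (legalMoves_nonempty G h))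
      (fun v => gameVal G true (D ∪ closedNbhd G v.1)) := by
  conv_lhs => rw [gameVal]
  rw [dif_neg h]; rfl


lemma legal_not_univ {D : Finset V} {v : V} (hv : v ∈ legalMoves G D) :
    D ≠ Finset.univ := by
  intro h
  simp only [legalMoves, Finset.mem_filter, Finset.mem_univ, true_and] at hv
  exact hv (h ▸ Finset.subset_univ _)

lemma not_legal_subset {D : Finset V} {v : V} (hv : v ∉ legalMoves G D) :
    closedNbhd G v ⊆ D := by
  simp only [legalMoves, Finset.mem_filter, Finset.mem_univ, true_and, not_not] at hv
  exact hv

lemma gameVal_true_le {D : Finset V} {v : V}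
    (hv : v ∈ legalMoves G D) :
    gameVal G true D ≤ 1 + gameVal G false (D ∪ closedNbhd G v) := by
  rw [gameVal_true_eq G (legal_not_univ G hv)]
  apply Nat.add_le_add_left
  exact Finset.inf'_le _ (Finset.mem_attach _ ⟨v, hv⟩)

lemma gameVal_true_exists {D : Finset V} (h : D ≠ Finset.univ) :
    ∃ v ∈ legalMoves G D,
      gameVal G true D = 1 + gameVal G false (D ∪ closedNbhd G v) := by
  have hne : (legalMoves G D).attach.Nonempty :=
    (Finset.attach_nonempty_iff).2 (legalMoves_nonempty G h)
  obtain ⟨v, _, hv2⟩ := Finset.exists_mem_eq_inf' hne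
    (fun w => gameVal G false (D ∪ closedNbhd G w.1))
  exact ⟨v.1, v.2, by rw [gameVal_true_eq G h, hv2]⟩

lemma gameVal_false_ge {D : Finset V} {v : V}
    (hv : v ∈ legalMoves G D) :
    1 + gameVal G true (D ∪ closedNbhd G v) ≤ gameVal G false D := by
  rw [gameVal_false_eq G (legal_not_univ G hv)]
  apply Nat.add_le_add_left
  exact Finset.le_sup' (fun w => gameVal G true (D ∪ closedNbhd G w.1))
    (Finset.mem_attach _ ⟨v, hv⟩)

lemma gameVal_false_exists {D : Finset V} (h : D ≠ Finset.univ) :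
    ∃ v ∈ legalMoves G D,
      gameVal G false D = 1 + gameVal G true (D ∪ closedNbhd G v) := by
  have hne : (legalMoves G D).attach.Nonempty :=
    (Finset.attach_nonempty_iff).2 (legalMoves_nonempty G h)
  obtain ⟨v, _, hv2⟩ := Finset.exists_mem_eq_sup' hne
    (fun w => gameVal G true (D ∪ closedNbhd G w.1))
  exact ⟨v.1, v.2, by rw [gameVal_false_eq G h, hv2]⟩

lemma gameVal_false_le {D : Finset V} (h : D ≠ Finset.univ) {K : ℕ}
    (H : ∀ v ∈ legalMoves G D, 1 + gameVal G true (D ∪ closedNbhd G v) ≤ K) :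
    gameVal G false D ≤ K := by
  obtain ⟨v, hv, heq⟩ := gameVal_false_exists G h
  rw [heq]
  exact H v hv

lemma gameVal_cont : ∀ (n : ℕ) (D D' : Finset V), D ⊆ D' → (Finset.univ \ D).card ≤ n →
    gameVal G true D' ≤ gameVal G true D ∧
    gameVal G false D' ≤ gameVal G false D ∧
    gameVal G true D' ≤ gameVal G false D + 1 ∧
    gameVal G false D' ≤ gameVal G true D + 1 := by
  intro n
  induction n using Nat.strong_induction_on with
  | _ n IH =>
  have ha : ∀ D D' : Finset V, D ⊆ D' → (Finset.univ \ D).card ≤ n →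
      gameVal G true D' ≤ gameVal G true D := by
    intro D D' hsub hcard
    by_cases hD' : D' = Finset.univ
    · rw [hD', gameVal_univ]; exact Nat.zero_le _
    · have hD : D ≠ Finset.univ := fun h => hD' (Finset.univ_subset_iff.mp (h ▸ hsub))
      obtain ⟨v, hv, heq⟩ := gameVal_true_exists G hD
      have hlt : (Finset.univ \ (D ∪ closedNbhd G v)).card < n :=
        lt_of_lt_of_le (card_lt_of_legal G hv) hcard
      by_cases hv' : v ∈ legalMoves G D'
      · have h1 := gameVal_true_le G hv'
        have h2 := (IH _ hlt (D ∪ closedNbhd G v) (D' ∪ closedNbhd G v)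
          (Finset.union_subset_union hsub (Finset.Subset.refl _)) le_rfl).2.1
        omega
      · have hsub2 : D ∪ closedNbhd G v ⊆ D' :=
          Finset.union_subset hsub (not_legal_subset G hv')
        have := (IH _ hlt (D ∪ closedNbhd G v) D' hsub2 le_rfl).2.2.1
        omega
  have hb : ∀ D D' : Finset V, D ⊆ D' → (Finset.univ \ D).card ≤ n →
      gameVal G false D' ≤ gameVal G false D := by
    intro D D' hsub hcard
    by_cases hD' : D' = Finset.univ
    · rw [hD', gameVal_univ]; exact Nat.zero_le _
    · obtain ⟨w, hw, heq⟩ := gameVal_false_exists G hD'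
      have hwD : w ∈ legalMoves G D := by
        simp only [legalMoves, Finset.mem_filter, Finset.mem_univ, true_and] at hw ⊢
        exact fun hc => hw (hc.trans hsub)
      have hlt : (Finset.univ \ (D ∪ closedNbhd G w)).card < n :=
        lt_of_lt_of_le (card_lt_of_legal G hwD) hcard
      have h1 := (IH _ hlt (D ∪ closedNbhd G w) (D' ∪ closedNbhd G w)
        (Finset.union_subset_union hsub (Finset.Subset.refl _)) le_rfl).1
      have h2 := gameVal_false_ge G hwD
      omega
  intro D D' hsub hcard
  refine ⟨ha D D' hsub hcard, hb D D' hsub hcard, ?_, ?_⟩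
  · by_cases hD' : D' = Finset.univ
    · rw [hD', gameVal_univ]; exact Nat.zero_le _
    · obtain ⟨v, hv⟩ := legalMoves_nonempty G hD'
      have hvD : v ∈ legalMoves G D := by
        simp only [legalMoves, Finset.mem_filter, Finset.mem_univ, true_and] at hv ⊢
        exact fun hc => hv (hc.trans hsub)
      have hlt : (Finset.univ \ (D ∪ closedNbhd G v)).card < n :=
        lt_of_lt_of_le (card_lt_of_legal G hvD) hcard
      have h1 := gameVal_true_le G hv
      have h2 := (IH _ hlt (D ∪ closedNbhd G v) (D' ∪ closedNbhd G v)
        (Finset.union_subset_union hsub (Finset.Subset.refl _)) le_rfl).2.2.2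
      have h3 := gameVal_false_ge G hvD
      omega
  · by_cases hD' : D' = Finset.univ
    · rw [hD', gameVal_univ]; exact Nat.zero_le _
    · obtain ⟨w, hw, heq⟩ := gameVal_false_exists G hD'
      have h1 := ha D (D' ∪ closedNbhd G w) (hsub.trans Finset.subset_union_left) hcard
      omega

lemma card_compl_lt_of_legal {D : Finset V} {v : V} (hv : v ∈ legalMoves G D) :
    Fintype.card V - (D ∪ closedNbhd G v).card < Fintype.card V - D.card := by
  simp only [legalMoves, Finset.mem_filter, Finset.mem_univ, true_and] at hv
  obtain ⟨u, hu1, hu2⟩ := Finset.not_subset.1 hv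
  have h1 : D ⊂ D ∪ closedNbhd G v :=
    Finset.ssubset_iff_of_subset Finset.subset_union_left |>.mpr
      ⟨u, Finset.mem_union_right _ hu1, hu2⟩
  have h2 := Finset.card_lt_card h1
  have h3 : (D ∪ closedNbhd G v).card ≤ Fintype.card V := by
    rw [← Finset.card_univ]
    exact Finset.card_le_card (Finset.subset_univ _)
  omega

end Helpers

section SumPart
variable {V₁ V₂ : Type*} [Fintype V₁] [Fintype V₂]
variable (G₁ : SimpleGraph V₁) (G₂ : SimpleGraph V₂)

noncomputable def stSum (D₁ : Finset V₁) (D₂ : Finset V₂) : Finset (V₁ ⊕ V₂) :=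
  D₁.image Sum.inl ∪ D₂.image Sum.inr

lemma mem_stSum_inl {D₁ : Finset V₁} {D₂ : Finset V₂} {v : V₁} :
    Sum.inl v ∈ stSum D₁ D₂ ↔ v ∈ D₁ := by simp [stSum]

lemma mem_stSum_inr {D₁ : Finset V₁} {D₂ : Finset V₂} {v : V₂} :
    Sum.inr v ∈ stSum D₁ D₂ ↔ v ∈ D₂ := by simp [stSum]

lemma stSum_univ_iff {D₁ : Finset V₁} {D₂ : Finset V₂} :
    stSum D₁ D₂ = Finset.univ ↔ D₁ = Finset.univ ∧ D₂ = Finset.univ := by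
  simp only [Finset.eq_univ_iff_forall]
  constructor
  · exact fun h => ⟨fun v => mem_stSum_inl.mp (h (Sum.inl v)),
      fun v => mem_stSum_inr.mp (h (Sum.inr v))⟩
  · rintro ⟨h1, h2⟩ (v | v)
    · exact mem_stSum_inl.mpr (h1 v)
    · exact mem_stSum_inr.mpr (h2 v)

lemma sumGraph_adj_inl_inl {u w : V₁} :
    (sumGraph G₁ G₂).Adj (Sum.inl u) (Sum.inl w) ↔ G₁.Adj u w := by
  show (SimpleGraph.fromRel _).Adj _ _ ↔ _
  rw [SimpleGraph.fromRel_adj]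
  constructor
  · rintro ⟨h, h1 | h1⟩
    · exact h1
    · exact h1.symm
  · exact fun h => ⟨fun he => G₁.irrefl (Sum.inl_injective he ▸ h), Or.inl h⟩

lemma sumGraph_adj_inr_inr {u w : V₂} :
    (sumGraph G₁ G₂).Adj (Sum.inr u) (Sum.inr w) ↔ G₂.Adj u w := by
  show (SimpleGraph.fromRel _).Adj _ _ ↔ _
  rw [SimpleGraph.fromRel_adj]
  constructor
  · rintro ⟨h, h1 | h1⟩
    · exact h1
    · exact h1.symm
  · exact fun h => ⟨fun he => G₂.irrefl (Sum.inr_injective he ▸ h), Or.inl h⟩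

lemma sumGraph_adj_inl_inr {u : V₁} {w : V₂} :
    ¬ (sumGraph G₁ G₂).Adj (Sum.inl u) (Sum.inr w) := by
  show ¬ (SimpleGraph.fromRel _).Adj _ _
  rw [SimpleGraph.fromRel_adj]
  rintro ⟨-, h | h⟩ <;> exact h

lemma sumGraph_adj_inr_inl {u : V₂} {w : V₁} :
    ¬ (sumGraph G₁ G₂).Adj (Sum.inr u) (Sum.inl w) := by
  show ¬ (SimpleGraph.fromRel _).Adj _ _
  rw [SimpleGraph.fromRel_adj]
  rintro ⟨-, h | h⟩ <;> exact h

lemma closedNbhd_sum_inl (v : V₁) :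
    closedNbhd (sumGraph G₁ G₂) (Sum.inl v) = (closedNbhd G₁ v).image Sum.inl := by
  ext x
  cases x with
  | inl u =>
    simp [closedNbhd, sumGraph_adj_inl_inl]
  | inr u =>
    simp [closedNbhd, sumGraph_adj_inl_inr]

lemma closedNbhd_sum_inr (v : V₂) :
    closedNbhd (sumGraph G₁ G₂) (Sum.inr v) = (closedNbhd G₂ v).image Sum.inr := by
  ext x
  cases x with
  | inl u =>
    simp [closedNbhd, sumGraph_adj_inr_inl]
  | inr u =>
    simp [closedNbhd, sumGraph_adj_inr_inr]

lemma stSum_union_inl {inst : DecidableEq (V₁ ⊕ V₂)} {D₁ : Finset V₁} {D₂ : Finset V₂} {v : V₁} :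
    @Union.union _ (@Finset.instUnion _ inst) (stSum D₁ D₂)
        (closedNbhd (sumGraph G₁ G₂) (Sum.inl v)) =
      stSum (D₁ ∪ closedNbhd G₁ v) D₂ := by
  rw [closedNbhd_sum_inl]
  ext x
  cases x with
  | inl u => simp [stSum]
  | inr u => simp [stSum]

lemma stSum_union_inr {inst : DecidableEq (V₁ ⊕ V₂)} {D₁ : Finset V₁} {D₂ : Finset V₂} {v : V₂} :
    @Union.union _ (@Finset.instUnion _ inst) (stSum D₁ D₂)
        (closedNbhd (sumGraph G₁ G₂) (Sum.inr v)) =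
      stSum D₁ (D₂ ∪ closedNbhd G₂ v) := by
  rw [closedNbhd_sum_inr]
  ext x
  cases x with
  | inl u => simp [stSum]
  | inr u => simp [stSum]

lemma legal_sum_inl {D₁ : Finset V₁} {D₂ : Finset V₂} {v : V₁} :
    Sum.inl v ∈ legalMoves (sumGraph G₁ G₂) (stSum D₁ D₂) ↔ v ∈ legalMoves G₁ D₁ := by
  simp only [legalMoves, Finset.mem_filter, Finset.mem_univ, true_and,
    closedNbhd_sum_inl]
  constructor
  · intro h hc
    exact h (fun x hx => by
      obtain ⟨u, hu, rfl⟩ := Finset.mem_image.mp hx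
      exact mem_stSum_inl.mpr (hc hu))
  · intro h hc
    exact h (fun u hu => mem_stSum_inl.mp (hc (Finset.mem_image_of_mem _ hu)))

lemma legal_sum_inr {D₁ : Finset V₁} {D₂ : Finset V₂} {v : V₂} :
    Sum.inr v ∈ legalMoves (sumGraph G₁ G₂) (stSum D₁ D₂) ↔ v ∈ legalMoves G₂ D₂ := by
  simp only [legalMoves, Finset.mem_filter, Finset.mem_univ, true_and,
    closedNbhd_sum_inr]
  constructor
  · intro h hc
    exact h (fun x hx => by
      obtain ⟨u, hu, rfl⟩ := Finset.mem_image.mp hx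
      exact mem_stSum_inr.mpr (hc hu))
  · intro h hc
    exact h (fun u hu => mem_stSum_inr.mp (hc (Finset.mem_image_of_mem _ hu)))

end SumPart

lemma not_legal_univ {V : Type*} [Fintype V] (G : SimpleGraph V) (v : V) :
    v ∉ legalMoves G Finset.univ := by
  simp [legalMoves]

section SumPart2
variable {V₁ V₂ : Type*} [Fintype V₁] [Fintype V₂]
variable (G₁ : SimpleGraph V₁) (G₂ : SimpleGraph V₂)

lemma gameVal_stSum_right : ∀ (n : ℕ) (D₂ : Finset V₂),
    (Finset.univ \ D₂).card ≤ n → ∀ t : Bool,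
    gameVal (sumGraph G₁ G₂) t (stSum Finset.univ D₂) = gameVal G₂ t D₂ := by
  intro n
  induction n using Nat.strong_induction_on with
  | _ n IH =>
  intro D₂ hcard t
  by_cases hD : D₂ = Finset.univ
  · subst hD
    rw [(stSum_univ_iff (V₁:=V₁) (V₂:=V₂)).mpr ⟨rfl, rfl⟩, gameVal_univ, gameVal_univ]
  · have hst : stSum (Finset.univ : Finset V₁) D₂ ≠ Finset.univ :=
      fun h => hD ((stSum_univ_iff (V₁:=V₁) (V₂:=V₂)).mp h).2
    cases t
    · -- t = false
      apply le_antisymm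
      · obtain ⟨m, hm, heq⟩ := gameVal_false_exists (sumGraph G₁ G₂) hst
        cases m with
        | inl v => exact absurd ((legal_sum_inl G₁ G₂).mp hm) (not_legal_univ G₁ v)
        | inr w =>
          have hw := (legal_sum_inr G₁ G₂).mp hm
          rw [heq, stSum_union_inr G₁ G₂]
          rw [IH _ (lt_of_lt_of_le (card_lt_of_legal G₂ hw) hcard) _ le_rfl]
          exact gameVal_false_ge G₂ hw
      · obtain ⟨w, hw, heq⟩ := gameVal_false_exists G₂ hD
        rw [heq]
        have h1 := gameVal_false_ge (sumGraph G₁ G₂)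
          ((legal_sum_inr G₁ G₂ (D₁ := (Finset.univ : Finset V₁))).mpr hw)
        rw [stSum_union_inr,
          IH _ (lt_of_lt_of_le (card_lt_of_legal G₂ hw) hcard) _ le_rfl] at h1
        exact h1
    · -- t = true
      apply le_antisymm
      · obtain ⟨w, hw, heq⟩ := gameVal_true_exists G₂ hD
        rw [heq]
        have h1 := gameVal_true_le (sumGraph G₁ G₂)
          ((legal_sum_inr G₁ G₂ (D₁ := (Finset.univ : Finset V₁))).mpr hw)
        rw [stSum_union_inr,
          IH _ (lt_of_lt_of_le (card_lt_of_legal G₂ hw) hcard) _ le_rfl] at h1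
        exact h1
      · obtain ⟨m, hm, heq⟩ := gameVal_true_exists (sumGraph G₁ G₂) hst
        cases m with
        | inl v => exact absurd ((legal_sum_inl G₁ G₂).mp hm) (not_legal_univ G₁ v)
        | inr w =>
          have hw := (legal_sum_inr G₁ G₂).mp hm
          rw [heq, stSum_union_inr G₁ G₂]
          rw [IH _ (lt_of_lt_of_le (card_lt_of_legal G₂ hw) hcard) _ le_rfl]
          exact gameVal_true_le G₂ hw

lemma gameVal_stSum_left : ∀ (n : ℕ) (D₁ : Finset V₁),
    (Finset.univ \ D₁).card ≤ n → ∀ t : Bool,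
    gameVal (sumGraph G₁ G₂) t (stSum D₁ Finset.univ) = gameVal G₁ t D₁ := by
  intro n
  induction n using Nat.strong_induction_on with
  | _ n IH =>
  intro D₁ hcard t
  by_cases hD : D₁ = Finset.univ
  · subst hD
    rw [(stSum_univ_iff (V₁:=V₁) (V₂:=V₂)).mpr ⟨rfl, rfl⟩, gameVal_univ, gameVal_univ]
  · have hst : stSum D₁ (Finset.univ : Finset V₂) ≠ Finset.univ :=
      fun h => hD ((stSum_univ_iff (V₁:=V₁) (V₂:=V₂)).mp h).1
    cases t
    · apply le_antisymm
      · obtain ⟨m, hm, heq⟩ := gameVal_false_exists (sumGraph G₁ G₂) hst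
        cases m with
        | inr v => exact absurd ((legal_sum_inr G₁ G₂).mp hm) (not_legal_univ G₂ v)
        | inl w =>
          have hw := (legal_sum_inl G₁ G₂).mp hm
          rw [heq, stSum_union_inl G₁ G₂]
          rw [IH _ (lt_of_lt_of_le (card_lt_of_legal G₁ hw) hcard) _ le_rfl]
          exact gameVal_false_ge G₁ hw
      · obtain ⟨w, hw, heq⟩ := gameVal_false_exists G₁ hD
        rw [heq]
        have h1 := gameVal_false_ge (sumGraph G₁ G₂)
          ((legal_sum_inl G₁ G₂ (D₂ := (Finset.univ : Finset V₂))).mpr hw)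
        rw [stSum_union_inl,
          IH _ (lt_of_lt_of_le (card_lt_of_legal G₁ hw) hcard) _ le_rfl] at h1
        exact h1
    · apply le_antisymm
      · obtain ⟨w, hw, heq⟩ := gameVal_true_exists G₁ hD
        rw [heq]
        have h1 := gameVal_true_le (sumGraph G₁ G₂)
          ((legal_sum_inl G₁ G₂ (D₂ := (Finset.univ : Finset V₂))).mpr hw)
        rw [stSum_union_inl,
          IH _ (lt_of_lt_of_le (card_lt_of_legal G₁ hw) hcard) _ le_rfl] at h1
        exact h1
      · obtain ⟨m, hm, heq⟩ := gameVal_true_exists (sumGraph G₁ G₂) hst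
        cases m with
        | inr v => exact absurd ((legal_sum_inr G₁ G₂).mp hm) (not_legal_univ G₂ v)
        | inl w =>
          have hw := (legal_sum_inl G₁ G₂).mp hm
          rw [heq, stSum_union_inl G₁ G₂]
          rw [IH _ (lt_of_lt_of_le (card_lt_of_legal G₁ hw) hcard) _ le_rfl]
          exact gameVal_true_le G₁ hw

lemma sum_main : ∀ (n : ℕ) (D₁ : Finset V₁) (D₂ : Finset V₂),
    Fintype.card (V₁ ⊕ V₂) - (stSum D₁ D₂).card ≤ n →
    (gameVal (sumGraph G₁ G₂) true (stSum D₁ D₂) ≤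
      gameVal G₁ true D₁ + gameVal G₂ false D₂ + 1) ∧
    (gameVal (sumGraph G₁ G₂) true (stSum D₁ D₂) ≤
      gameVal G₁ false D₁ + gameVal G₂ true D₂ + 1) ∧
    (gameVal (sumGraph G₁ G₂) false (stSum D₁ D₂) ≤
      gameVal G₁ false D₁ + gameVal G₂ false D₂ + 1) := by
  intro n
  induction n using Nat.strong_induction_on with
  | _ n IH =>
  intro D₁ D₂ hcard
  by_cases hst : stSum D₁ D₂ = Finset.univ
  · refine ⟨?_, ?_, ?_⟩ <;> (rw [hst, gameVal_univ]; exact Nat.zero_le _)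
  refine ⟨?_, ?_, ?_⟩
  · -- P1
    by_cases hD1 : D₁ = Finset.univ
    · have hD2 : D₂ ≠ Finset.univ := fun h => hst ((stSum_univ_iff (V₁:=V₁) (V₂:=V₂)).mpr ⟨hD1, h⟩)
      subst hD1
      rw [gameVal_stSum_right G₁ G₂ _ D₂ le_rfl, gameVal_univ]
      have := (gameVal_cont G₂ ((Finset.univ \ D₂).card) D₂ D₂
        (Finset.Subset.refl _) le_rfl).2.2.1
      omega
    · obtain ⟨v, hv, heq⟩ := gameVal_true_exists G₁ hD1
      have hlegal : Sum.inl v ∈ legalMoves (sumGraph G₁ G₂) (stSum D₁ D₂) :=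
        (legal_sum_inl G₁ G₂).mpr hv
      have h1 := gameVal_true_le (sumGraph G₁ G₂) hlegal
      rw [stSum_union_inl] at h1
      have hlt : Fintype.card (V₁ ⊕ V₂) - (stSum (D₁ ∪ closedNbhd G₁ v) D₂).card < n := by
        have := card_compl_lt_of_legal (sumGraph G₁ G₂) hlegal
        rw [stSum_union_inl] at this
        omega
      have h2 := (IH _ hlt (D₁ ∪ closedNbhd G₁ v) D₂ le_rfl).2.2
      omega
  · -- P2
    by_cases hD2 : D₂ = Finset.univ
    · have hD1 : D₁ ≠ Finset.univ := fun h => hst ((stSum_univ_iff (V₁:=V₁) (V₂:=V₂)).mpr ⟨h, hD2⟩)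
      subst hD2
      rw [gameVal_stSum_left G₁ G₂ _ D₁ le_rfl, gameVal_univ]
      have := (gameVal_cont G₁ ((Finset.univ \ D₁).card) D₁ D₁
        (Finset.Subset.refl _) le_rfl).2.2.1
      omega
    · obtain ⟨v, hv, heq⟩ := gameVal_true_exists G₂ hD2
      have hlegal : Sum.inr v ∈ legalMoves (sumGraph G₁ G₂) (stSum D₁ D₂) :=
        (legal_sum_inr G₁ G₂).mpr hv
      have h1 := gameVal_true_le (sumGraph G₁ G₂) hlegal
      rw [stSum_union_inr] at h1
      have hlt : Fintype.card (V₁ ⊕ V₂) - (stSum D₁ (D₂ ∪ closedNbhd G₂ v)).card < n := by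
        have := card_compl_lt_of_legal (sumGraph G₁ G₂) hlegal
        rw [stSum_union_inr] at this
        omega
      have h2 := (IH _ hlt D₁ (D₂ ∪ closedNbhd G₂ v) le_rfl).2.2
      omega
  · -- Q
    apply gameVal_false_le (sumGraph G₁ G₂) hst
    intro m hm
    cases m with
    | inl w =>
      have hw := (legal_sum_inl G₁ G₂).mp hm
      rw [stSum_union_inl]
      have hlt : Fintype.card (V₁ ⊕ V₂) - (stSum (D₁ ∪ closedNbhd G₁ w) D₂).card < n := by
        have := card_compl_lt_of_legal (sumGraph G₁ G₂) hm
        rw [stSum_union_inl] at this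
        omega
      have h1 := (IH _ hlt (D₁ ∪ closedNbhd G₁ w) D₂ le_rfl).1
      have h2 := gameVal_false_ge G₁ hw
      omega
    | inr w =>
      have hw := (legal_sum_inr G₁ G₂).mp hm
      rw [stSum_union_inr]
      have hlt : Fintype.card (V₁ ⊕ V₂) - (stSum D₁ (D₂ ∪ closedNbhd G₂ w)).card < n := by
        have := card_compl_lt_of_legal (sumGraph G₁ G₂) hm
        rw [stSum_union_inr] at this
        omega
      have h1 := (IH _ hlt D₁ (D₂ ∪ closedNbhd G₂ w) le_rfl).2.1
      have h2 := gameVal_false_ge G₂ hw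
      omega

end SumPart2


/-- For graphs `G₁`, `G₂` without isolated vertices,
`γ_g(G₁ ∪ G₂) ≤ γ_g(G₁) + γ_g(G₂) + 2`. -/
theorem stmt15 {V₁ V₂ : Type*} [Fintype V₁] [Fintype V₂]
    (G₁ : SimpleGraph V₁) (G₂ : SimpleGraph V₂)
    (h1 : ∀ v : V₁, ∃ w, G₁.Adj v w) (h2 : ∀ v : V₂, ∃ w, G₂.Adj v w) :
    gammaG (sumGraph G₁ G₂) ∅ ≤ gammaG G₁ ∅ + gammaG G₂ ∅ + 2 := by
  have hst : stSum (∅ : Finset V₁) (∅ : Finset V₂) = (∅ : Finset (V₁ ⊕ V₂)) := by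
    simp [stSum]
  have h := (sum_main G₁ G₂ (Fintype.card (V₁ ⊕ V₂) - (stSum (∅ : Finset V₁) (∅ : Finset V₂)).card)
    ∅ ∅ le_rfl).1
  rw [hst] at h
  have hc := (gameVal_cont G₂ ((Finset.univ \ (∅ : Finset V₂)).card) ∅ ∅
    (Finset.Subset.refl _) le_rfl).2.2.2
  simp only [gammaG]
  omega
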